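/- In SSL, for distinct agents a, b: S_aφ → ¬K_bS_aφ and S_aφ → ¬K_b¬S_aφ are derivable (higher-order opacity). -/

import Mathlib

/-- Formulas of the epistemic-secrecy language: atoms, ⊤, ¬, ∧, K_a, S_a
(→, ↔, ⊥ are defined by abbreviation). -/
inductive Form (A P : Type) : Type where
  | atom : P → Form A P
  | top : Form A P
  | neg : Form A P → Form A P
  | and : Form A P → Form A P → Form A P
  | K : A → Form A P → Form A P
  | S : A → Form A P → Form A P

namespace Form
variable {A P : Type}
/-- Material implication, defined from ¬ and ∧. -/
def imp (φ ψ : Form A P) : Form A P := neg (and φ (neg ψ))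
/-- Biconditional. -/
def iff (φ ψ : Form A P) : Form A P := and (imp φ ψ) (imp ψ φ)
/-- Falsum. -/
def bot : Form A P := neg top
end Form

/-- A boolean interpretation of formulas: any assignment of truth values to formulas
that respects ⊤, ¬ and ∧ (treating atoms and modal formulas as atomic). -/
def PropEval {A P : Type} (g : Form A P → Prop) : Prop :=
  g Form.top ∧ (∀ φ : Form A P, g (Form.neg φ) ↔ ¬ g φ) ∧
    (∀ φ ψ : Form A P, g (Form.and φ ψ) ↔ (g φ ∧ g ψ))

/-- The Hilbert system SSL: all instances of propositional tautologies, the S5 axioms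
(K), (T), (4), (5) for each K_a, the secrecy axioms (S1) S_aφ → K_aφ,
(S2) S_aφ → ¬K_bφ for b ≠ a, (S4) S_aφ → K_aS_aφ, with rules modus ponens,
knowledge necessitation, and replacement of provable equivalents under S_a. -/
inductive Prov {A P : Type} : Form A P → Prop
  | taut (φ : Form A P) :
      (∀ g : Form A P → Prop, PropEval g → g φ) → Prov φ
  | axK (a : A) (φ ψ : Form A P) :
      Prov ((Form.K a (φ.imp ψ)).imp ((Form.K a φ).imp (Form.K a ψ)))
  | axT (a : A) (φ : Form A P) : Prov ((Form.K a φ).imp φ)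
  | ax4 (a : A) (φ : Form A P) : Prov ((Form.K a φ).imp (Form.K a (Form.K a φ)))
  | ax5 (a : A) (φ : Form A P) :
      Prov ((Form.neg (Form.K a φ)).imp (Form.K a (Form.neg (Form.K a φ))))
  | axS1 (a : A) (φ : Form A P) : Prov ((Form.S a φ).imp (Form.K a φ))
  | axS2 {a b : A} (φ : Form A P) :
      b ≠ a → Prov ((Form.S a φ).imp (Form.neg (Form.K b φ)))
  | axS4 (a : A) (φ : Form A P) : Prov ((Form.S a φ).imp (Form.K a (Form.S a φ)))
  | mp {φ ψ : Form A P} : Prov (φ.imp ψ) → Prov φ → Prov ψ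
  | nec (a : A) {φ : Form A P} : Prov φ → Prov (Form.K a φ)
  | re (a : A) {φ ψ : Form A P} :
      Prov (φ.iff ψ) → Prov ((Form.S a φ).iff (Form.S a ψ))

namespace PropEval

variable {A P : Type} {g : Form A P → Prop}

theorem neg_iff (hg : PropEval g) (φ : Form A P) : g (Form.neg φ) ↔ ¬ g φ :=
  hg.2.1 φ

theorem imp_iff (hg : PropEval g) (φ ψ : Form A P) : g (φ.imp ψ) ↔ (g φ → g ψ) := by
  simp only [Form.imp, hg.neg_iff, hg.2.2]
  tauto

end PropEval

namespace Prov

variable {A P : Type} {φ ψ χ : Form A P}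

theorem of_semantic_imp (hφ : Prov φ) (h : ∀ g : Form A P → Prop, PropEval g → g φ → g ψ) :
    Prov ψ :=
  mp (taut _ fun g hg => (hg.imp_iff φ ψ).2 (h g hg)) hφ

theorem imp_trans (h₁ : Prov (φ.imp ψ)) (h₂ : Prov (ψ.imp χ)) : Prov (φ.imp χ) := by
  refine mp (h₁.of_semantic_imp fun g hg => ?_) h₂
  simp only [hg.imp_iff]
  exact fun hφψ hψχ hφ => hψχ (hφψ hφ)

theorem imp_neg_comm (h : Prov (φ.imp (Form.neg ψ))) : Prov (ψ.imp (Form.neg φ)) :=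
  h.of_semantic_imp fun g hg => by
    simp only [hg.imp_iff, hg.neg_iff]
    exact fun hφψ hψ hφ => hφψ hφ hψ

theorem K_mono (b : A) (h : Prov (φ.imp ψ)) : Prov ((Form.K b φ).imp (Form.K b ψ)) :=
  mp (axK b φ ψ) (nec b h)

theorem S_imp_self (a : A) (φ : Form A P) : Prov ((Form.S a φ).imp φ) :=
  (axS1 a φ).imp_trans (axT a φ)

end Prov

/-- Higher-order opacity: in SSL, for distinct agents `a, b`, both
`S_a φ → ¬K_b S_a φ` and `S_a φ → ¬K_b ¬S_a φ` are derivable. -/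
theorem ssl_higher_order_opacity {A P : Type} (a b : A) (hab : a ≠ b) (φ : Form A P) :
    Prov ((Form.S a φ).imp (Form.neg (Form.K b (Form.S a φ)))) ∧
    Prov ((Form.S a φ).imp (Form.neg (Form.K b (Form.neg (Form.S a φ))))) := by
  have hK_secret_imp_K : Prov ((Form.K b (Form.S a φ)).imp (Form.K b φ)) :=
    Prov.K_mono b (Prov.S_imp_self a φ)
  have hK_imp_not_secret : Prov ((Form.K b φ).imp (Form.neg (Form.S a φ))) :=
    (Prov.axS2 φ hab.symm).imp_neg_comm
  exact ⟨(hK_secret_imp_K.imp_trans hK_imp_not_secret).imp_neg_comm,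
    (Prov.axT b (Form.neg (Form.S a φ))).imp_neg_comm⟩
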